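/- arXiv:1703.06130 — 4 statements merged into one kernel-verified Lean document; each statement's English description precedes it below -/
import Mathlib

section
/- Let c ≥ 2 and 1 ≤ k ≤ c/β for a constant β ≥ 2. Consider the (c,k)-bipartite hitting game: a referee privately selects a matching M of size k in the complete bipartite graph K_{c,c}; in each round the player proposes one edge and wins upon proposing an edge of M. Any (possibly randomized) player strategy that wins within f(c,k) rounds with probability at least 1/2 must satisfy f(c,k) ≥ c²/(α·k), where α = 2·(β/(β-1))². -/
/-- A set of edges of the complete bipartite graph `K_{c,c}` (edges are pairs in
`Fin c × Fin c`) is a matching if no two distinct edges share an endpoint. -/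
def IsBipartiteMatching (c : ℕ) (s : Finset (Fin c × Fin c)) : Prop :=
  ∀ e ∈ s, ∀ e' ∈ s, e ≠ e' → e.1 ≠ e'.1 ∧ e.2 ≠ e'.2

/-!
Sum the winning probabilities over all `N` matchings of size `k`. Relabelling each side of
`K_{c,c}` by a transposition shows that every edge lies in the same number `m` of them, so in each
round the probabilities that the proposed edge lies in the individual matchings sum to exactly `m`,
and double counting gives `c² · m = k · N`. With the union bound over the first `f` rounds this
gives `N / 2 ≤ f · m`, hence `c² ≤ 2 f k`, which is stronger than the claim as `β / (β - 1) ≥ 1`.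
-/

open Finset MeasureTheory
open scoped ENNReal

section Hitting

variable {α : Type*} [MeasurableSpace α] [MeasurableSingletonClass α]

theorem sum_measure_eq_of_forall_card_filter_mem_eq [Fintype α] [DecidableEq α] (ν : Measure α)
    [IsProbabilityMeasure ν] {B : Finset (Finset α)} {m : ℕ} (hm : ∀ a, #{s ∈ B | a ∈ s} = m) :
    ∑ s ∈ B, ν s = m := by
  calc ∑ s ∈ B, ν s = ∑ s ∈ B, ∑ a, if a ∈ s then ν {a} else 0 := by
        simp only [sum_ite_mem, univ_inter, sum_measure_singleton]
    _ = ∑ a, (m : ℝ≥0∞) * ν {a} := by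
        rw [sum_comm]
        refine sum_congr rfl fun a _ => ?_
        rw [← sum_filter, sum_const, hm, nsmul_eq_mul]
    _ = m := by rw [← mul_sum, sum_measure_singleton, coe_univ, measure_univ, mul_one]

theorem measure_exists_lt_mem_le_sum (μ : Measure (ℕ → α)) (f : ℕ) (s : Finset α) :
    μ {σ | ∃ r < f, σ r ∈ s} ≤ ∑ r ∈ range f, μ.map (fun σ => σ r) s := by
  have hcover : {σ : ℕ → α | ∃ r < f, σ r ∈ s} = ⋃ r ∈ range f, (fun σ => σ r) ⁻¹' s := by
    ext σ
    simp
  rw [hcover]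
  refine (measure_biUnion_finset_le _ _).trans (sum_le_sum fun r _ => ?_)
  rw [Measure.map_apply (measurable_pi_apply r) s.measurableSet]

theorem card_le_of_hitting [Fintype α] [DecidableEq α] (μ : Measure (ℕ → α))
    [IsProbabilityMeasure μ] {B : Finset (Finset α)} (hB : B.Nonempty) {k m f : ℕ}
    (hk : ∀ s ∈ B, #s = k) (hm : ∀ a, #{s ∈ B | a ∈ s} = m)
    (hwin : ∀ s ∈ B, 1 / 2 ≤ μ {σ | ∃ r < f, σ r ∈ s}) :
    Fintype.card α ≤ 2 * f * k := by
  have hcount : #B ≤ 2 * f * m := by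
    have hhalf : (#B : ℝ≥0∞) / 2 ≤ f * m := calc
      (#B : ℝ≥0∞) / 2 = ∑ _s ∈ B, 1 / 2 := by
        rw [sum_const, nsmul_eq_mul, ENNReal.div_eq_inv_mul, one_div, mul_comm]
      _ ≤ ∑ s ∈ B, ∑ r ∈ range f, μ.map (fun σ => σ r) s :=
        sum_le_sum fun s hs => (hwin s hs).trans (measure_exists_lt_mem_le_sum μ f s)
      _ = ∑ r ∈ range f, (m : ℝ≥0∞) := by
        rw [sum_comm]
        refine sum_congr rfl fun r _ => ?_
        have := Measure.isProbabilityMeasure_map (μ := μ) (measurable_pi_apply r).aemeasurable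
        exact sum_measure_eq_of_forall_card_filter_mem_eq _ hm
      _ = f * m := by rw [sum_const, card_range, nsmul_eq_mul]
    rw [ENNReal.div_le_iff two_ne_zero ENNReal.ofNat_ne_top, mul_comm, ← mul_assoc] at hhalf
    exact_mod_cast hhalf
  have hdouble : Fintype.card α * m = #B * k := by
    rw [← sum_card hm, sum_congr rfl hk, sum_const, smul_eq_mul]
  refine Nat.le_of_mul_le_mul_right ?_ hB.card_pos
  calc Fintype.card α * #B ≤ Fintype.card α * (2 * f * m) := Nat.mul_le_mul_left _ hcount
    _ = 2 * f * (Fintype.card α * m) := by ring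
    _ = 2 * f * k * #B := by rw [hdouble]; ring

end Hitting

instance (c : ℕ) : DecidablePred (IsBipartiteMatching c) := fun s => by
  unfold IsBipartiteMatching; infer_instance

def bipartiteMatchings (c k : ℕ) : Finset (Finset (Fin c × Fin c)) :=
  {s | #s = k ∧ IsBipartiteMatching c s}

theorem IsBipartiteMatching.map_prodCongr {c : ℕ} {s : Finset (Fin c × Fin c)}
    (hs : IsBipartiteMatching c s) (g h : Fin c ≃ Fin c) :
    IsBipartiteMatching c (s.map (g.prodCongr h).toEmbedding) := by
  simp only [IsBipartiteMatching, mem_map, Equiv.coe_toEmbedding, forall_exists_index, and_imp]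
  rintro _ e he rfl _ e' he' rfl hne
  simpa using hs e he e' he' (fun h => hne (h ▸ rfl))

theorem card_filter_mem_bipartiteMatchings_le {c k : ℕ} (e e' : Fin c × Fin c) :
    #{s ∈ bipartiteMatchings c k | e ∈ s} ≤ #{s ∈ bipartiteMatchings c k | e' ∈ s} := by
  let relabel := ((Equiv.swap e.1 e'.1).prodCongr (Equiv.swap e.2 e'.2)).toEmbedding
  have hrelabel : relabel e = e' := Prod.ext (Equiv.swap_apply_left _ _) (Equiv.swap_apply_left _ _)
  refine card_le_card_of_injOn (fun s => s.map relabel) (fun s hs => ?_)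
    (fun s _ t _ hst => map_injective relabel hst)
  simp only [bipartiteMatchings, coe_filter, mem_filter, mem_univ, true_and] at hs ⊢
  obtain ⟨⟨hcard, hmatch⟩, he⟩ := hs
  exact ⟨⟨by rw [card_map, hcard], hmatch.map_prodCongr _ _⟩,
    hrelabel ▸ mem_map_of_mem relabel he⟩

theorem card_filter_mem_bipartiteMatchings_eq {c k : ℕ} (e e' : Fin c × Fin c) :
    #{s ∈ bipartiteMatchings c k | e ∈ s} = #{s ∈ bipartiteMatchings c k | e' ∈ s} :=
  (card_filter_mem_bipartiteMatchings_le e e').antisymm (card_filter_mem_bipartiteMatchings_le e' e)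

theorem bipartiteMatchings_nonempty {c k : ℕ} (hkc : k ≤ c) :
    (bipartiteMatchings c k).Nonempty := by
  obtain ⟨t, -, ht⟩ := exists_subset_card_eq (s := (univ : Finset (Fin c))) (by simpa using hkc)
  let diag : Fin c ↪ Fin c × Fin c := ⟨fun i => (i, i), fun i j h => congrArg Prod.fst h⟩
  refine ⟨t.map diag, ?_⟩
  simp only [bipartiteMatchings, mem_filter, mem_univ, true_and, card_map, ht]
  simp only [IsBipartiteMatching, mem_map, forall_exists_index, and_imp]
  rintro _ i - rfl _ j - rfl hne
  have : i ≠ j := fun h => hne (h ▸ rfl)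
  exact ⟨this, this⟩

theorem sq_le_two_mul_mul_of_hitting {c k f : ℕ} (hc : 1 ≤ c) (hkc : k ≤ c)
    (μ : Measure (ℕ → Fin c × Fin c)) [IsProbabilityMeasure μ]
    (hwin : ∀ s ∈ bipartiteMatchings c k, 1 / 2 ≤ μ {σ | ∃ r < f, σ r ∈ s}) :
    c ^ 2 ≤ 2 * f * k := by
  let e₀ : Fin c × Fin c := (⟨0, hc⟩, ⟨0, hc⟩)
  have := card_le_of_hitting μ (bipartiteMatchings_nonempty hkc)
    (fun s hs => (mem_filter.1 hs).2.1) (fun e => card_filter_mem_bipartiteMatchings_eq e e₀) hwin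
  simpa [sq] using this

/-- Lower bound for the `(c,k)`-bipartite hitting game: a (possibly randomized) player,
modeled as a probability distribution over infinite sequences of proposed edges, that for
every matching `M` of size `k` wins within `f` rounds (i.e. proposes an edge of `M` in some
round `r < f`) with probability at least `1/2`, must satisfy
`f ≥ c²/(α·k)` where `α = 2·(β/(β-1))²`, for `2 ≤ c`, `1 ≤ k ≤ c/β`, `β ≥ 2`. -/
theorem stmt_7 (c k : ℕ) (β : ℝ) (hc : 2 ≤ c) (hk : 1 ≤ k) (hβ : 2 ≤ β)
    (hkc : (k : ℝ) ≤ c / β) (f : ℕ) (strategy : PMF (ℕ → Fin c × Fin c))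
    (hwin : ∀ s : Finset (Fin c × Fin c), s.card = k → IsBipartiteMatching c s →
      1 / 2 ≤ strategy.toMeasure {σ | ∃ r < f, σ r ∈ s}) :
    (c : ℝ) ^ 2 / (2 * (β / (β - 1)) ^ 2 * k) ≤ f := by
  have hkc' : k ≤ c := by
    exact_mod_cast hkc.trans (div_le_self (Nat.cast_nonneg c) (by linarith))
  have hsq : ((c ^ 2 : ℕ) : ℝ) ≤ ((2 * f * k : ℕ) : ℝ) :=
    Nat.cast_le.2 <| sq_le_two_mul_mul_of_hitting (by omega) hkc' strategy.toMeasure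
      fun s hs => hwin s (mem_filter.1 hs).2.1 (mem_filter.1 hs).2.2
  push_cast at hsq
  have hk0 : (0 : ℝ) < k := by exact_mod_cast hk
  have hratio : 1 ≤ (β / (β - 1)) ^ 2 :=
    one_le_pow₀ ((one_le_div (by linarith)).2 (by linarith))
  calc (c : ℝ) ^ 2 / (2 * (β / (β - 1)) ^ 2 * k) ≤ c ^ 2 / (2 * k) :=
        div_le_div_of_nonneg_left (by positivity) (by positivity) (by nlinarith)
    _ ≤ f := by rw [div_le_iff₀ (by positivity)]; linarith
end

section
/- Consider the c-complete bipartite hitting game: a referee privately selects a perfect matching M in the complete bipartite graph K_{c,c}; in each round the player proposes one edge and wins upon proposing an edge of M. Any player that wins within f(c) rounds with probability at least 1/2 must satisfy f(c) ≥ c/3. -/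
/-!
Average over the `c!` perfect matchings `{(i, π i)}` given by permutations `π`. A fixed edge
`(a, b)` lies in exactly `(c - 1)!` of them, so whatever the player proposes in round `r`, the
probabilities of hitting these matchings in that round sum to `(c - 1)!`. By the union bound over
the first `f` rounds, the winning probabilities sum to at most `f (c - 1)!`, while by assumption
they sum to at least `c! / 2`; hence `c ≤ 2 f`.
-/

open MeasureTheory Finset ENNReal

theorem card_filter_perm_apply_eq {α : Type*} [Fintype α] [DecidableEq α] (a b : α) :
    #{π : Equiv.Perm α | π a = b} = (Fintype.card α - 1).factorial := by
  have h_indep : ∀ b', #{π : Equiv.Perm α | π a = b'} = #{π : Equiv.Perm α | π a = b} := by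
    intro b'
    refine card_bij' (fun π _ => Equiv.swap b' b * π) (fun π _ => Equiv.swap b' b * π)
      ?_ ?_ ?_ ?_ <;> intro π hπ <;> simp_all [← mul_assoc]
  have h_sum :
      Fintype.card α * #{π : Equiv.Perm α | π a = b} = (Fintype.card α).factorial := by
    have h_fibers := card_eq_sum_card_fiberwise (s := (univ : Finset (Equiv.Perm α)))
      fun π _ => mem_univ (π a)
    simpa [h_indep, Fintype.card_perm] using h_fibers.symm
  have h_pos : 0 < Fintype.card α := Fintype.card_pos_iff.mpr ⟨a⟩
  rw [← Nat.mul_factorial_pred h_pos.ne'] at h_sum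
  exact Nat.eq_of_mul_eq_mul_left h_pos h_sum

theorem sum_measure_le_of_card_le {α ι : Type*} [MeasurableSpace α] [Fintype ι]
    (ν : Measure α) {S : ι → Set α} [∀ x, DecidablePred (x ∈ S ·)]
    (hS : ∀ i, MeasurableSet (S i)) {k : ℕ} (hk : ∀ x, #{i | x ∈ S i} ≤ k) :
    ∑ i, ν (S i) ≤ k * ν Set.univ := by
  calc ∑ i, ν (S i) = ∫⁻ x, ∑ i, (S i).indicator 1 x ∂ν := by
        rw [lintegral_finsetSum _ fun i _ => measurable_one.indicator (hS i)]
        simp_rw [lintegral_indicator_one (hS _)]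
    _ ≤ ∫⁻ _, (k : ℝ≥0∞) ∂ν := by
        refine lintegral_mono fun x => ?_
        simp only [Set.indicator_apply, Pi.one_apply, sum_boole]
        exact_mod_cast hk x
    _ = k * ν Set.univ := lintegral_const _

theorem sum_measure_exists_lt_mem_le {α ι : Type*} [MeasurableSpace α] [Fintype ι]
    (μ : Measure (ℕ → α)) {S : ι → Set α} [∀ x, DecidablePred (x ∈ S ·)]
    (hS : ∀ i, MeasurableSet (S i)) {k : ℕ} (hk : ∀ x, #{i | x ∈ S i} ≤ k) (f : ℕ) :
    ∑ i, μ {σ | ∃ r < f, σ r ∈ S i} ≤ f * k * μ Set.univ := by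
  have h_round (r : ℕ) : ∑ i, μ ((fun σ => σ r) ⁻¹' S i) ≤ k * μ Set.univ :=
    letI (σ : ℕ → α) : DecidablePred (σ ∈ (fun σ => σ r) ⁻¹' S ·) :=
      inferInstanceAs (DecidablePred (σ r ∈ S ·))
    sum_measure_le_of_card_le μ (fun i => measurable_pi_apply r (hS i)) fun σ => hk (σ r)
  calc ∑ i, μ {σ | ∃ r < f, σ r ∈ S i}
      ≤ ∑ i, ∑ r ∈ range f, μ ((fun σ => σ r) ⁻¹' S i) := by
        refine sum_le_sum fun i _ => ?_
        have h_union : {σ : ℕ → α | ∃ r < f, σ r ∈ S i} =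
            ⋃ r ∈ range f, (fun σ => σ r) ⁻¹' S i := by
          ext σ; simp
        exact h_union ▸ measure_biUnion_finset_le (range f) _
    _ = ∑ r ∈ range f, ∑ i, μ ((fun σ => σ r) ⁻¹' S i) := sum_comm
    _ ≤ ∑ r ∈ range f, k * μ Set.univ := sum_le_sum fun r _ => h_round r
    _ = f * k * μ Set.univ := by rw [sum_const, card_range, nsmul_eq_mul, mul_assoc]

theorem le_two_mul_of_factorial_le {c f : ℕ} (h : c.factorial ≤ 2 * f * (c - 1).factorial) :
    c ≤ 2 * f := by
  rcases Nat.eq_zero_or_pos c with rfl | hc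
  · exact Nat.zero_le _
  rw [← Nat.mul_factorial_pred hc.ne'] at h
  exact Nat.le_of_mul_le_mul_right h (Nat.factorial_pos _)

def permMatching {c : ℕ} (π : Equiv.Perm (Fin c)) : Finset (Fin c × Fin c) :=
  univ.image fun i => (i, π i)

theorem mem_permMatching {c : ℕ} {π : Equiv.Perm (Fin c)} {e : Fin c × Fin c} :
    e ∈ permMatching π ↔ π e.1 = e.2 := by
  obtain ⟨a, b⟩ := e
  simp [permMatching, eq_comm]

theorem card_permMatching {c : ℕ} (π : Equiv.Perm (Fin c)) : #(permMatching π) = c := by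
  rw [permMatching, card_image_of_injective _ fun i j h => (Prod.mk.inj h).1, card_univ,
    Fintype.card_fin]

theorem isBipartiteMatching_permMatching {c : ℕ} (π : Equiv.Perm (Fin c)) :
    IsBipartiteMatching c (permMatching π) := by
  intro e he e' he' hne
  rw [mem_permMatching] at he he'
  refine ⟨fun h₁ => hne (Prod.ext h₁ ?_), fun h₂ => hne (Prod.ext ?_ h₂)⟩
  · rw [← he, ← he', h₁]
  · exact π.injective (he.trans (h₂.trans he'.symm))

theorem card_filter_mem_permMatching {c : ℕ} (e : Fin c × Fin c) :
    #{π : Equiv.Perm (Fin c) | e ∈ (permMatching π : Set (Fin c × Fin c))} =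
      (c - 1).factorial := by
  simp only [mem_coe, mem_permMatching]
  convert card_filter_perm_apply_eq e.1 e.2 using 2
  simp

theorem stmt_8_general (c : ℕ) (f : ℕ) (strategy : PMF (ℕ → Fin c × Fin c))
    (hwin : ∀ s : Finset (Fin c × Fin c), s.card = c → IsBipartiteMatching c s →
      1 / 2 ≤ strategy.toMeasure {σ | ∃ r < f, σ r ∈ s}) :
    (c : ℝ) / 3 ≤ f := by
  have h_upper := sum_measure_exists_lt_mem_le strategy.toMeasure
    (S := fun π : Equiv.Perm (Fin c) => (permMatching π : Set (Fin c × Fin c)))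
    (fun _ => (Set.toFinite _).measurableSet) (fun e => (card_filter_mem_permMatching e).le) f
  have h_lower : Fintype.card (Equiv.Perm (Fin c)) • (1 / 2 : ℝ≥0∞) ≤
      ∑ π : Equiv.Perm (Fin c), strategy.toMeasure {σ | ∃ r < f, σ r ∈ permMatching π} :=
    card_nsmul_le_sum _ _ _ fun π _ =>
      hwin _ (card_permMatching π) (isBipartiteMatching_permMatching π)
  have h_factorial : c.factorial ≤ 2 * f * (c - 1).factorial := by
    have h := h_lower.trans h_upper
    rw [measure_univ, mul_one, Fintype.card_perm, Fintype.card_fin, nsmul_eq_mul, mul_one_div,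
      ENNReal.div_le_iff_le_mul (by norm_num) (by norm_num)] at h
    rw [mul_comm 2, mul_right_comm]
    exact_mod_cast h
  have h_two : (c : ℝ) ≤ 2 * f := by exact_mod_cast le_two_mul_of_factorial_le h_factorial
  linarith

/-- Lower bound for the `c`-complete bipartite hitting game: a (possibly randomized) player,
modeled as a probability distribution over infinite sequences of proposed edges, that for
every perfect matching `M` of `K_{c,c}` wins within `f` rounds (proposes an edge of `M` in
some round `r < f`) with probability at least `1/2`, must satisfy `f ≥ c/3`. -/
theorem stmt_8 (c : ℕ) (hc : 1 ≤ c) (f : ℕ) (strategy : PMF (ℕ → Fin c × Fin c))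
    (hwin : ∀ s : Finset (Fin c × Fin c), s.card = c → IsBipartiteMatching c s →
      1 / 2 ≤ strategy.toMeasure {σ | ∃ r < f, σ r ∈ s}) :
    (c : ℝ) / 3 ≤ f :=
  stmt_8_general c f strategy hwin
end

section
/- Consider a rooted complete tree of height D in which every non-leaf node has exactly b ≥ 1 children, and a broadcast process in discrete time slots where initially only the root holds a message, and in each time slot each node holding the message may transmit it to at most one of its children (messages cannot travel between siblings or skip levels). Then at least D·b time slots are required before all nodes at depth D hold the message. -/
/-!
Induction on the depth `d`: some node at depth `d` is not informed before slot `d·b`. Each of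
its `b` children is first informed in a slot in which the parent already holds the message,
and no two children in the same slot, so these are `b` distinct slots `≥ d·b`; the last of
them is `≥ d·b + b - 1`, so that child is not informed before slot `(d + 1)·b`.
-/

open Finset

lemma Set.exists_lt_notMem_and_mem_succ {α : Type*} {S : ℕ → Set α} {x : α} (h0 : x ∉ S 0) :
    ∀ {t : ℕ}, x ∈ S t → ∃ s < t, x ∉ S s ∧ x ∈ S (s + 1)
  | 0, ht => absurd ht h0
  | t + 1, ht => by
    by_cases hx : x ∈ S t
    · obtain ⟨s, hst, hs⟩ := exists_lt_notMem_and_mem_succ h0 hx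
      exact ⟨s, by omega, hs⟩
    · exact ⟨t, t.lt_succ_self, hx, ht⟩

/-- Nodes of the rooted tree with children indexed by `ι` are lists over `ι`, the children of `l`
being the `l ++ [i]`; `informed t` is the set of nodes holding the message at the start of
slot `t`. -/
structure IsTreeBroadcast {ι : Type*} (informed : ℕ → Set (List ι)) : Prop where
  informed_zero : informed 0 = {[]}
  parent_mem : ∀ t (l : List ι) (i : ι),
    l ++ [i] ∈ informed (t + 1) → l ++ [i] ∉ informed t → l ∈ informed t
  subsingleton_newly_informed : ∀ t (l : List ι),
    {i : ι | l ++ [i] ∈ informed (t + 1) ∧ l ++ [i] ∉ informed t}.Subsingleton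

namespace IsTreeBroadcast

variable {ι : Type*} {informed : ℕ → Set (List ι)}

lemma child_notMem_zero (hB : IsTreeBroadcast informed) (l : List ι) (i : ι) :
    l ++ [i] ∉ informed 0 := by
  simp [hB.informed_zero]

lemma exists_child_forall_notMem [Fintype ι] [Nonempty ι] (hB : IsTreeBroadcast informed)
    {l : List ι} {s : ℕ} (hl : ∀ t < s, l ∉ informed t) :
    ∃ i, ∀ t < s + Fintype.card ι, l ++ [i] ∉ informed t := by
  by_contra! hearly
  choose t ht_lt ht_mem using hearly
  choose r hr_lt hr_notMem hr_mem using fun i ↦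
    Set.exists_lt_notMem_and_mem_succ (hB.child_notMem_zero l i) (ht_mem i)
  have hr_ge : ∀ i, s ≤ r i := fun i ↦
    not_lt.1 fun h ↦ hl _ h (hB.parent_mem _ l i (hr_mem i) (hr_notMem i))
  have hr_inj : Function.Injective r := fun i j hij ↦
    hB.subsingleton_newly_informed (r i) l ⟨hr_mem i, hr_notMem i⟩
      ⟨hij ▸ hr_mem j, hij ▸ hr_notMem j⟩
  have hcard := card_le_card_of_injOn r (s := univ) (t := Ico s (s + Fintype.card ι - 1))
    (fun i _ ↦ mem_Ico.2 ⟨hr_ge i, by have := ht_lt i; have := hr_lt i; omega⟩)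
    hr_inj.injOn
  rw [card_univ, Nat.card_Ico] at hcard
  have := Fintype.card_pos (α := ι)
  omega

lemma exists_length_eq_forall_notMem [Fintype ι] [Nonempty ι] (hB : IsTreeBroadcast informed)
    (d : ℕ) : ∃ l : List ι, l.length = d ∧ ∀ t < d * Fintype.card ι, l ∉ informed t := by
  induction d with
  | zero => exact ⟨[], rfl, by simp⟩
  | succ d ih =>
    obtain ⟨l, hlen, hl⟩ := ih
    obtain ⟨i, hi⟩ := hB.exists_child_forall_notMem hl
    exact ⟨l ++ [i], by simp [hlen], by rwa [Nat.succ_mul]⟩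

end IsTreeBroadcast

theorem stmt_13_general (b D T : ℕ) (hb : 1 ≤ b)
    (informed : ℕ → Set (List (Fin b)))
    (h0 : informed 0 = {[]})
    (hparent : ∀ t (l : List (Fin b)) (i : Fin b),
      l ++ [i] ∈ informed (t + 1) → l ++ [i] ∉ informed t → l ∈ informed t)
    (hone : ∀ t (l : List (Fin b)),
      {i : Fin b | l ++ [i] ∈ informed (t + 1) ∧ l ++ [i] ∉ informed t}.Subsingleton)
    (hall : ∀ l : List (Fin b), l.length = D → l ∈ informed T) :
    D * b ≤ T := by
  have : Nonempty (Fin b) := ⟨⟨0, hb⟩⟩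
  obtain ⟨l, hlen, hl⟩ :=
    (IsTreeBroadcast.mk h0 hparent hone).exists_length_eq_forall_notMem D
  rw [Fintype.card_fin] at hl
  by_contra! hT
  exact hl T hT (hall l hlen)

/-- Broadcast lower bound on a complete tree. Nodes of the complete `b`-ary tree are
represented as lists over `Fin b` (the root is `[]`, and the children of `l` are the
nodes `l ++ [i]`); nodes at depth `d` are the lists of length `d`. `informed t` is the
set of nodes holding the message at the start of slot `t`. Initially only the root is
informed; informed nodes stay informed; a node can only become informed if its parent
was informed in the previous slot; and in each slot each node transmits to at most one
of its children. If all nodes at depth `D` are informed at time `T`, then `D·b ≤ T`. -/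
theorem stmt_13 (b D T : ℕ) (hb : 1 ≤ b)
    (informed : ℕ → Set (List (Fin b)))
    (h0 : informed 0 = {[]})
    (hmono : ∀ t, informed t ⊆ informed (t + 1))
    (hparent : ∀ t (l : List (Fin b)) (i : Fin b),
      l ++ [i] ∈ informed (t + 1) → l ++ [i] ∉ informed t → l ∈ informed t)
    (hone : ∀ t (l : List (Fin b)),
      {i : Fin b | l ++ [i] ∈ informed (t + 1) ∧ l ++ [i] ∉ informed t}.Subsingleton)
    (hall : ∀ l : List (Fin b), l.length = D → l ∈ informed T) :
    D * b ≤ T :=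
  stmt_13_general b D T hb informed h0 hparent hone hall
end

section
/- In one phase of the randomized node-coloring procedure, an active node w with set W of active neighbors becomes inactive (decides its color) with probability at least 1/4, provided the number of colors remaining available to w is at least max(1, |W|). -/
open MeasureTheory ProbabilityTheory
open scoped ENNReal

/-- Choices (an element of the palette, or `none` for passing) live in a discrete
measurable space. -/
instance optionMeasurableSpace {C : Type*} : MeasurableSpace (Option C) := ⊤

instance optionMeasurableSingletonClass {C : Type*} :
    MeasurableSingletonClass (Option C) :=
  ⟨fun _ => MeasurableSpace.measurableSet_top⟩

/-- One phase of the randomized node-coloring procedure. Node `w` and its active neighbors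
(indexed by `ι`) each independently either pass (choice `none`, with probability `1/2`) or
pick a color uniformly at random from their remaining palette; `w`'s palette is `Pw`, so it
picks each color of `Pw` with probability `1/(2·|Pw|)`. If `|Pw| ≥ max(1, |ι|)`, then with
probability at least `1/4` node `w` picks a color that no active neighbor picked (and thus
becomes inactive). -/
theorem stmt_15 {Ω : Type*} [MeasurableSpace Ω] (μ : Measure Ω) [IsProbabilityMeasure μ]
    {C : Type*} [Fintype C] [DecidableEq C]
    {ι : Type*} [Fintype ι]
    (Z : Option ι → Ω → Option C) (hmeas : ∀ i, Measurable (Z i))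
    (hind : iIndepFun (m := fun _ : Option ι => (inferInstance : MeasurableSpace (Option C))) Z μ)
    (Pw : Finset C)
    (hwnone : μ {ω | Z none ω = none} = 1 / 2)
    (hwcol : ∀ c ∈ Pw, μ {ω | Z none ω = some c} = ((2 : ℝ≥0∞) * Pw.card)⁻¹)
    (hwout : ∀ c ∉ Pw, μ {ω | Z none ω = some c} = 0)
    (hnbr : ∀ i : ι, μ {ω | Z (some i) ω = none} = 1 / 2)
    (hcard : max 1 (Fintype.card ι) ≤ Pw.card) :
    1 / 4 ≤ μ {ω | Z none ω ≠ none ∧ ∀ i : ι, Z (some i) ω ≠ Z none ω} := by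
  classical
  have hκpos : 0 < Pw.card := lt_of_lt_of_le one_pos (le_trans (le_max_left _ _) hcard)
  have hκ0 : ((Pw.card : ℝ≥0∞)) ≠ 0 := by exact_mod_cast hκpos.ne'
  have hκtop : ((Pw.card : ℝ≥0∞)) ≠ ∞ := ENNReal.natCast_ne_top _
  have hm : ∀ (j : Option ι) (x : Option C), MeasurableSet {ω | Z j ω = x} := by
    intro j x
    exact (hmeas j) (measurableSet_singleton x)
  -- each node picks a color with total probability 1/2
  have hsum : ∀ j : Option ι, μ {ω | Z j ω = none} = 1/2 →
      ∑ c : C, μ {ω | Z j ω = some c} = 1/2 := by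
    intro j hj
    have hU : (⋃ c : C, {ω | Z j ω = some c}) = {ω | Z j ω = none}ᶜ := by
      ext ω
      simp [Option.ne_none_iff_exists']
    have hdisj : Pairwise (Function.onFun Disjoint (fun c : C => {ω | Z j ω = some c})) := by
      intro c c' hcc
      refine Set.disjoint_left.2 ?_
      intro ω h1 h2
      simp only [Set.mem_setOf_eq] at h1 h2
      exact hcc (by rw [h1] at h2; exact Option.some.inj h2)
    have := measure_iUnion (μ := μ) hdisj (fun c => hm j (some c))
    rw [hU, measure_compl (hm j none) (measure_ne_top μ _), hj] at this
    rw [← tsum_fintype (L := SummationFilter.unconditional C) (f := fun c : C => μ {ω | Z j ω = some c}), ← this, measure_univ]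
    exact ENNReal.sub_half ENNReal.one_ne_top
  -- w's choice bound
  have hwbound : ∀ c : C, μ {ω | Z none ω = some c} ≤ ((2 : ℝ≥0∞) * Pw.card)⁻¹ := by
    intro c
    by_cases hc : c ∈ Pw
    · exact le_of_eq (hwcol c hc)
    · rw [hwout c hc]; exact zero_le
  -- collision probability with a single neighbor
  have hcoll : ∀ i : ι, μ {ω | Z none ω ≠ none ∧ Z (some i) ω = Z none ω}
      ≤ ((2 : ℝ≥0∞) * Pw.card)⁻¹ * (1/2) := by
    intro i
    have hdecomp : {ω | Z none ω ≠ none ∧ Z (some i) ω = Z none ω}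
        = ⋃ c : C, ({ω | Z none ω = some c} ∩ {ω | Z (some i) ω = some c}) := by
      ext ω
      simp only [Set.mem_setOf_eq, Set.mem_iUnion, Set.mem_inter_iff]
      constructor
      · rintro ⟨h1, h2⟩
        obtain ⟨c, hc⟩ := Option.ne_none_iff_exists'.mp h1
        exact ⟨c, hc, h2.trans hc⟩
      · rintro ⟨c, h1, h2⟩
        exact ⟨by simp [h1], h2.trans h1.symm⟩
    have hdisj : Pairwise (Function.onFun Disjoint
        (fun c : C => {ω | Z none ω = some c} ∩ {ω | Z (some i) ω = some c})) := by
      intro c c' hcc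
      refine Set.disjoint_left.2 ?_
      rintro ω ⟨h1, _⟩ ⟨h2, _⟩
      simp only [Set.mem_setOf_eq] at h1 h2
      exact hcc (by rw [h1] at h2; exact Option.some.inj h2)
    have hindep : IndepFun (Z none) (Z (some i)) μ :=
      hind.indepFun (show (none : Option ι) ≠ some i by simp)
    have hprod : ∀ c : C, μ ({ω | Z none ω = some c} ∩ {ω | Z (some i) ω = some c})
        = μ {ω | Z none ω = some c} * μ {ω | Z (some i) ω = some c} := by
      intro c
      have := hindep.measure_inter_preimage_eq_mul {some c} {some c}
        (measurableSet_singleton _) (measurableSet_singleton _)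
      simpa [Set.preimage, Set.mem_singleton_iff] using this
    calc μ {ω | Z none ω ≠ none ∧ Z (some i) ω = Z none ω}
        = ∑ c : C, μ ({ω | Z none ω = some c} ∩ {ω | Z (some i) ω = some c}) := by
          rw [hdecomp, measure_iUnion hdisj (fun c => (hm none (some c)).inter (hm (some i) (some c))),
            tsum_fintype]
      _ ≤ ∑ c : C, ((2 : ℝ≥0∞) * Pw.card)⁻¹ * μ {ω | Z (some i) ω = some c} := by
          refine Finset.sum_le_sum fun c _ => ?_
          rw [hprod c]
          exact mul_le_mul_left (hwbound c) _
      _ = ((2 : ℝ≥0∞) * Pw.card)⁻¹ * ∑ c : C, μ {ω | Z (some i) ω = some c} := by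
          rw [Finset.mul_sum]
      _ = ((2 : ℝ≥0∞) * Pw.card)⁻¹ * (1/2) := by rw [hsum (some i) (hnbr i)]
  -- the bad event
  set Bad := ⋃ i : ι, {ω | Z none ω ≠ none ∧ Z (some i) ω = Z none ω} with hBadDef
  have hBad : μ Bad ≤ 1/4 := by
    calc μ Bad ≤ ∑ i : ι, μ {ω | Z none ω ≠ none ∧ Z (some i) ω = Z none ω} :=
          measure_iUnion_fintype_le _ _
      _ ≤ ∑ _i : ι, ((2 : ℝ≥0∞) * Pw.card)⁻¹ * (1/2) := Finset.sum_le_sum fun i _ => hcoll i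
      _ = (Fintype.card ι : ℝ≥0∞) * (((2 : ℝ≥0∞) * Pw.card)⁻¹ * (1/2)) := by
          simp [Finset.sum_const, nsmul_eq_mul]
      _ ≤ (Pw.card : ℝ≥0∞) * (((2 : ℝ≥0∞) * Pw.card)⁻¹ * (1/2)) := by
          refine mul_le_mul_left ?_ _
          exact_mod_cast le_trans (le_max_right _ _) hcard
      _ = 1/4 := by
          rw [ENNReal.mul_inv (Or.inl (by norm_num)) (Or.inl (by norm_num))]
          rw [show (Pw.card : ℝ≥0∞) * ((2 : ℝ≥0∞)⁻¹ * (Pw.card : ℝ≥0∞)⁻¹ * (1/2))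
            = ((Pw.card : ℝ≥0∞) * (Pw.card : ℝ≥0∞)⁻¹) * ((2 : ℝ≥0∞)⁻¹ * (1/2)) by ring]
          rw [ENNReal.mul_inv_cancel hκ0 hκtop, one_mul, ENNReal.div_eq_inv_mul, mul_one,
            ← ENNReal.mul_inv (Or.inl (by norm_num)) (Or.inl (by norm_num)), one_div]
          norm_num
  -- total probability that w picks a color
  have hA : μ {ω | Z none ω ≠ none} = 1/2 := by
    have : {ω | Z none ω ≠ none} = {ω | Z none ω = none}ᶜ := rfl
    rw [this, measure_compl (hm none none) (measure_ne_top μ _), hwnone, measure_univ]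
    exact ENNReal.sub_half ENNReal.one_ne_top
  set G := {ω | Z none ω ≠ none ∧ ∀ i : ι, Z (some i) ω ≠ Z none ω} with hGDef
  have hsub : {ω | Z none ω ≠ none} ⊆ G ∪ Bad := by
    intro ω h
    by_cases hh : ∀ i, Z (some i) ω ≠ Z none ω
    · exact Or.inl ⟨h, hh⟩
    · push_neg at hh
      obtain ⟨i, hi⟩ := hh
      exact Or.inr (Set.mem_iUnion.2 ⟨i, h, hi⟩)
  have hkey : (1 : ℝ≥0∞)/2 ≤ μ G + 1/4 := by
    calc (1 : ℝ≥0∞)/2 = μ {ω | Z none ω ≠ none} := hA.symm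
      _ ≤ μ (G ∪ Bad) := measure_mono hsub
      _ ≤ μ G + μ Bad := measure_union_le _ _
      _ ≤ μ G + 1/4 := add_le_add_right hBad _
  have h24 : (1 : ℝ≥0∞)/2 = 1/4 + 1/4 := by
    rw [ENNReal.div_add_div_same, ENNReal.div_eq_div_iff] <;> norm_num
  rw [h24] at hkey
  exact (ENNReal.add_le_add_iff_right (by norm_num)).mp hkey
end
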